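/- arXiv:1907.05135 — 4 statements merged into one kernel-verified Lean document; each statement's English description precedes it below -/
import Mathlib

section
/- Consider the 4-vertex graph on vertices {a,b,c,d} with edges (a,b), (a,c), (b,c), (c,d). The maximum matching has size 2. If a uniformly random permutation of the vertices is chosen as a decision order, and each unmatched vertex in turn greedily matches its favorite unmatched neighbor under the common preference order c > b > a > d, then the expected size of the resulting matching is 5/4. Hence the ratio of expected matching size to maximum matching size is 5/8. -/
/-- Adjacency of the 4-vertex graph `a=0, b=1, c=2, d=3` with edges
`(a,b), (a,c), (b,c), (c,d)`. -/
def adj4 (u v : Fin 4) : Bool :=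
  ([((0:Fin 4),(1:Fin 4)), (0,2), (1,2), (2,3)].contains (u, v)) ||
  ([((0:Fin 4),(1:Fin 4)), (0,2), (1,2), (2,3)].contains (v, u))

/-- The common preference order `c > b > a > d`. -/
def pref4 : List (Fin 4) := [2, 1, 0, 3]

/-- Whether `u` is covered by the partial matching `M`. -/
def matchedIn (M : List (Fin 4 × Fin 4)) (u : Fin 4) : Bool :=
  M.any fun e => e.1 = u || e.2 = u

/-- One run of the greedy algorithm: vertices act in the given order; an unmatched
vertex matches its most preferred unmatched neighbor, if any. -/
def rdoRun : List (Fin 4) → List (Fin 4 × Fin 4) → List (Fin 4 × Fin 4)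
  | [], M => M
  | u :: rest, M =>
    if matchedIn M u then rdoRun rest M
    else
      match pref4.find? (fun v => adj4 u v && !matchedIn M v) with
      | some v => rdoRun rest ((u, v) :: M)
      | none => rdoRun rest M

/-- The matching produced by RDO with decision order `order`. -/
def rdo (order : List (Fin 4)) : List (Fin 4 × Fin 4) := rdoRun order []

/-- The 4-vertex graph as a simple graph. -/
def G4 : SimpleGraph (Fin 4) where
  Adj u v := adj4 u v
  symm := ⟨by intro u v h; revert h; revert u v; decide⟩
  loopless := ⟨by intro u h; revert h; revert u; decide⟩

/-!
The graph has the perfect matching `{ab, cd}`. Under the preference `c > b > a > d`, whichever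
of `a`, `b`, `c` acts first is matched inside the triangle through `c` (`a` and `b` pick `c`,
`c` picks `b`), after which no remaining vertex has a free neighbour. Only when `d` acts first is
`cd` taken, and then `a` and `b` match each other. So RDO finds two edges on the 6 orders starting
with `d` and one edge on the other 18, in total `30` over all 24 orders.
-/

open SimpleGraph Subgraph

theorem exists_perfectMatching_G4 :
    ∃ P : Subgraph G4, P.IsMatching ∧ P.verts = Set.univ := by
  refine ⟨G4.subgraphOfAdj (show G4.Adj 0 1 from rfl) ⊔
      G4.subgraphOfAdj (show G4.Adj 2 3 from rfl),
    (IsMatching.subgraphOfAdj _).sup (IsMatching.subgraphOfAdj _) ?_, ?_⟩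
  · simp only [support_subgraphOfAdj, Set.disjoint_left]
    decide
  · ext v
    fin_cases v <;> simp

theorem length_rdo_of_mem_permutations {l : List (Fin 4)}
    (hl : l ∈ ([0, 1, 2, 3] : List (Fin 4)).permutations) :
    (rdo l).length = if l.head? = some 3 then 2 else 1 := by
  rw [List.mem_permutations, ← List.mem_permutations'] at hl
  revert l
  decide

-- `permutations'` rather than `permutations` because only the former reduces in the kernel.
theorem sum_length_rdo_permutations :
    (([0, 1, 2, 3] : List (Fin 4)).permutations.map fun l => (rdo l).length).sum = 30 := by
  rw [List.map_congr_left fun _ => length_rdo_of_mem_permutations,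
    ((List.permutations_perm_permutations' _).map _).sum_eq]
  decide

/-- The graph has a perfect matching (hence maximum matching size `2`),
the expected size of the RDO matching over a uniformly random decision order is `5/4`,
and hence the ratio of expected matching size to maximum matching size is `5/8`. -/
theorem stmt1 :
    (∃ P : SimpleGraph.Subgraph G4, P.IsMatching ∧ P.verts = Set.univ) ∧
    ((([0, 1, 2, 3] : List (Fin 4)).permutations.map
        (fun l => ((rdo l).length : ℚ))).sum / 24 = 5 / 4) ∧
    ((([0, 1, 2, 3] : List (Fin 4)).permutations.map
        (fun l => ((rdo l).length : ℚ))).sum / 24) / 2 = 5 / 8 := by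
  have hsum : (([0, 1, 2, 3] : List (Fin 4)).permutations.map
      (fun l => ((rdo l).length : ℚ))).sum = 30 := by
    simpa [Nat.cast_list_sum, Function.comp_def] using
      congrArg (Nat.cast : ℕ → ℚ) sum_length_rdo_permutations
  refine ⟨exists_perfectMatching_G4, ?_, ?_⟩ <;> rw [hsum] <;> norm_num
end

section
/- With g, h as in the explicit construction, for all θ, λ ∈ [0,1], the quantity (1−θ)(1−λ)(1−g(min{θ,λ})+h(min{θ,λ})) + (1−θ)∫₀^λ g(y) dy + (1−λ)∫₀^θ (g(y)−h(y)) dy + ∫₀^{min{θ,λ}} (θ+λ−2y) g(y) dy is at least 0.5014. -/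
/-- The explicit piecewise linear function `g` from the paper. -/
noncomputable def g (y : ℝ) : ℝ :=
  if y ≤ 0.13 then 0.365 * y + 0.48926
  else if y < 0.4 then 0.067 * y + 0.528
  else 0.5548

/-- `h = (1 - g)/10`. -/
noncomputable def h (y : ℝ) : ℝ := (1 - g y) / 10

/-- `m = min {g - h, 1 - g}`. -/
noncomputable def m (y : ℝ) : ℝ := min (g y - h y) (1 - g y)

/-!
Integrating the piecewise affine `g` explicitly turns the quantity into a piecewise polynomial
of degree three in `(θ, λ)`, whose pieces are cut out by `θ ≤ λ` or `λ ≤ θ` and by the breakpoints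
`0.13`, `0.4` of `min θ λ` and of the other variable. On every piece but one, products of the
piece's constraints and squares centred at `(0.315, 0.205)`, near the interior minimiser, certify
the bound. The exception is `λ ≤ 0.13`, `0.4 < θ`: there `g` is constant on `[0.4, θ]`, so the
quantity is affine in `θ` and it suffices to check `θ = 0.4` and `θ = 1`; at `θ = 1`, `λ ≈ 0.035`
it exceeds `0.5014` by only `3 · 10⁻⁶`.
-/

open Set intervalIntegral

theorem integral_eq_of_eqOn_affine {f : ℝ → ℝ} {u x a b : ℝ} (hux : u ≤ x)
    (hf : ∀ y ∈ Icc u x, f y = a * y + b) :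
    ∫ y in u..x, f y = a * (x ^ 2 - u ^ 2) / 2 + b * (x - u) := by
  rw [integral_congr (g := fun y => a * y + b) (by rwa [uIcc_of_le hux]),
    integral_add (intervalIntegrable_id.const_mul a) intervalIntegrable_const,
    integral_const_mul, integral_id, integral_const, smul_eq_mul]
  ring

theorem integral_mul_eq_of_eqOn_affine {f : ℝ → ℝ} {u x a b : ℝ} (hux : u ≤ x)
    (hf : ∀ y ∈ Icc u x, f y = a * y + b) :
    ∫ y in u..x, y * f y = a * (x ^ 3 - u ^ 3) / 3 + b * (x ^ 2 - u ^ 2) / 2 := by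
  rw [integral_congr (g := fun y => a * y ^ 2 + b * y)
      (fun y hy => by rw [hf y (by rwa [uIcc_of_le hux] at hy)]; ring),
    integral_add ((intervalIntegrable_pow 2).const_mul a) (intervalIntegrable_id.const_mul b),
    integral_const_mul, integral_const_mul, integral_pow, integral_id]
  ring

theorem g_of_le {y : ℝ} (hy : y ≤ 0.13) : g y = 0.365 * y + 0.48926 := if_pos hy

theorem g_of_mem_Icc {y : ℝ} (hy : y ∈ Icc (0.13 : ℝ) 0.4) : g y = 0.067 * y + 0.528 := by
  unfold g
  split_ifs with h₁ h₂
  · rw [le_antisymm h₁ hy.1]; norm_num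
  · rfl
  · rw [le_antisymm hy.2 (not_lt.mp h₂)]; norm_num

theorem g_of_ge {y : ℝ} (hy : 0.4 ≤ y) : g y = 0.5548 := by
  unfold g
  split_ifs <;> first | rfl | linarith

-- The slopes 0.365 > 0.067 > 0 decrease, so `g` is the lower envelope of its pieces.
theorem g_eq_min (y : ℝ) : g y = min (min (0.365 * y + 0.48926) (0.067 * y + 0.528)) 0.5548 := by
  unfold g
  split_ifs <;> simp only [min_def] <;> split_ifs <;> linarith

theorem continuous_g : Continuous g :=
  (continuous_congr g_eq_min).mpr (by fun_prop)

theorem intervalIntegrable_g (u v : ℝ) : IntervalIntegrable g MeasureTheory.volume u v :=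
  continuous_g.intervalIntegrable u v

theorem intervalIntegrable_id_mul_g (u v : ℝ) :
    IntervalIntegrable (fun y => y * g y) MeasureTheory.volume u v :=
  (continuous_id.mul continuous_g).intervalIntegrable u v

noncomputable def gIntegral (x : ℝ) : ℝ :=
  if x ≤ 0.13 then 0.1825 * x ^ 2 + 0.48926 * x
  else if x ≤ 0.4 then 0.0335 * x ^ 2 + 0.528 * x - 0.0025181
  else 0.5548 * x - 0.0078781

noncomputable def gMoment (x : ℝ) : ℝ :=
  if x ≤ 0.13 then (0.365 * x ^ 3 + 0.73389 * x ^ 2) / 3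
  else if x ≤ 0.4 then (0.067 * x ^ 3 + 0.792 * x ^ 2 - 0.000327353) / 3
  else (0.8322 * x ^ 2 - 0.002471353) / 3

theorem integral_g {x : ℝ} (hx : 0 ≤ x) : ∫ y in (0 : ℝ)..x, g y = gIntegral x := by
  rcases le_or_gt x 0.13 with h₁ | h₁
  · rw [integral_eq_of_eqOn_affine hx fun y hy => g_of_le (hy.2.trans h₁), gIntegral,
      if_pos h₁]
    ring
  rw [← integral_add_adjacent_intervals (intervalIntegrable_g 0 0.13) (intervalIntegrable_g 0.13 x),
    integral_eq_of_eqOn_affine (by norm_num) fun y hy => g_of_le hy.2]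
  rcases le_or_gt x 0.4 with h₂ | h₂
  · rw [integral_eq_of_eqOn_affine h₁.le fun y hy => g_of_mem_Icc ⟨hy.1, hy.2.trans h₂⟩,
      gIntegral, if_neg h₁.not_ge, if_pos h₂]
    ring
  rw [← integral_add_adjacent_intervals (intervalIntegrable_g 0.13 0.4)
      (intervalIntegrable_g 0.4 x),
    integral_eq_of_eqOn_affine (by norm_num) fun y hy => g_of_mem_Icc hy,
    integral_eq_of_eqOn_affine (a := 0) h₂.le
      fun y hy => by rw [g_of_ge hy.1, zero_mul, zero_add],
    gIntegral, if_neg h₁.not_ge, if_neg h₂.not_ge]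
  ring

theorem integral_mul_g {x : ℝ} (hx : 0 ≤ x) : ∫ y in (0 : ℝ)..x, y * g y = gMoment x := by
  rcases le_or_gt x 0.13 with h₁ | h₁
  · rw [integral_mul_eq_of_eqOn_affine hx fun y hy => g_of_le (hy.2.trans h₁), gMoment,
      if_pos h₁]
    ring
  rw [← integral_add_adjacent_intervals (intervalIntegrable_id_mul_g 0 0.13)
      (intervalIntegrable_id_mul_g 0.13 x),
    integral_mul_eq_of_eqOn_affine (by norm_num) fun y hy => g_of_le hy.2]
  rcases le_or_gt x 0.4 with h₂ | h₂
  · rw [integral_mul_eq_of_eqOn_affine h₁.le fun y hy => g_of_mem_Icc ⟨hy.1, hy.2.trans h₂⟩,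
      gMoment, if_neg h₁.not_ge, if_pos h₂]
    ring
  rw [← integral_add_adjacent_intervals (intervalIntegrable_id_mul_g 0.13 0.4)
      (intervalIntegrable_id_mul_g 0.4 x),
    integral_mul_eq_of_eqOn_affine (by norm_num) fun y hy => g_of_mem_Icc hy,
    integral_mul_eq_of_eqOn_affine (a := 0) h₂.le
      fun y hy => by rw [g_of_ge hy.1, zero_mul, zero_add],
    gMoment, if_neg h₁.not_ge, if_neg h₂.not_ge]
  ring

noncomputable def lowerBound (θ lam : ℝ) : ℝ :=
  (1 - θ) * (1 - lam) * (1 - g (min θ lam) + h (min θ lam))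
    + (1 - θ) * (∫ y in (0:ℝ)..lam, g y)
    + (1 - lam) * (∫ y in (0:ℝ)..θ, (g y - h y))
    + ∫ y in (0:ℝ)..(min θ lam), (θ + lam - 2 * y) * g y

theorem lowerBound_eq {θ lam : ℝ} (hθ : 0 ≤ θ) (hlam : 0 ≤ lam) :
    lowerBound θ lam = 11 / 10 * (1 - θ) * (1 - lam) * (1 - g (min θ lam))
      + (1 - θ) * gIntegral lam + (1 - lam) * (11 / 10 * gIntegral θ - θ / 10)
      + (θ + lam) * gIntegral (min θ lam) - 2 * gMoment (min θ lam) := by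
  have hgh : ∫ y in (0:ℝ)..θ, (g y - h y) = 11 / 10 * (∫ y in (0:ℝ)..θ, g y) - θ / 10 := by
    simp only [h, show ∀ y, g y - (1 - g y) / 10 = 11 / 10 * g y - 1 / 10 from fun y => by ring]
    rw [integral_sub ((intervalIntegrable_g 0 θ).const_mul _) intervalIntegrable_const,
      integral_const_mul, integral_const, smul_eq_mul]
    ring
  have hmin : ∫ y in (0:ℝ)..(min θ lam), (θ + lam - 2 * y) * g y
      = (θ + lam) * (∫ y in (0:ℝ)..(min θ lam), g y)
        - 2 * ∫ y in (0:ℝ)..(min θ lam), y * g y := by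
    simp only [sub_mul, mul_assoc]
    rw [integral_sub ((intervalIntegrable_g _ _).const_mul _)
      ((intervalIntegrable_id_mul_g _ _).const_mul _), integral_const_mul,
      integral_const_mul]
  have ht : 0 ≤ min θ lam := le_min hθ hlam
  rw [lowerBound, hgh, hmin, h, integral_g hθ, integral_g hlam, integral_g ht, integral_mul_g ht]
  ring

theorem le_lowerBound_of_le {θ lam : ℝ} (hθ : 0 ≤ θ) (hle : θ ≤ lam) (hlam : lam ≤ 1) :
    0.5014 ≤ lowerBound θ lam := by
  rw [lowerBound_eq hθ (hθ.trans hle), min_eq_left hle]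
  unfold g gIntegral gMoment
  split_ifs <;> nlinarith [sq_nonneg (θ - 0.315), sq_nonneg (lam - 0.205)]

theorem le_lowerBound_of_le_of_gt {θ lam : ℝ} (hlam : 0 ≤ lam) (hlam_small : lam ≤ 0.13)
    (hθ_large : 0.4 < θ) (hθ : θ ≤ 1) : 0.5014 ≤ lowerBound θ lam := by
  have hθ_not_small : ¬θ ≤ 0.13 := by linarith
  rw [lowerBound_eq (by linarith) hlam, min_eq_right (by linarith)]
  simp only [g, gIntegral, gMoment, if_pos hlam_small, if_neg hθ_not_small,
    if_neg hθ_large.not_ge]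
  -- the bound is now affine in θ; these are its excess over 0.5014 at θ = 1 and at θ = 0.4
  have at_one : 0 ≤ 0.00021409 - 0.01235409 * lam + 0.1825 * lam ^ 2 - 73 / 1200 * lam ^ 3 := by
    nlinarith [mul_nonneg (show (0:ℝ) ≤ 0.17831467 - 73 / 1200 * lam by linarith)
      (sq_nonneg (lam - 0.0344))]
  have at_04 : 0 ≤ 0.03113449 - 0.28417449 * lam + 0.4234 * lam ^ 2 - 73 / 1200 * lam ^ 3 := by
    nlinarith [mul_nonneg hlam (sub_nonneg.2 hlam_small),
      mul_nonneg (sub_nonneg.2 hlam_small) (sq_nonneg lam)]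
  nlinarith [mul_nonneg (sub_nonneg.2 hθ) at_04, mul_nonneg (sub_nonneg.2 hθ_large.le) at_one]

theorem le_lowerBound_of_ge {θ lam : ℝ} (hlam : 0 ≤ lam) (hle : lam ≤ θ) (hθ : θ ≤ 1) :
    0.5014 ≤ lowerBound θ lam := by
  by_cases hcorner : lam ≤ 0.13 ∧ 0.4 < θ
  · exact le_lowerBound_of_le_of_gt hlam hcorner.1 hcorner.2 hθ
  rw [lowerBound_eq (hlam.trans hle) hlam, min_eq_right hle]
  unfold g gIntegral gMoment
  rcases not_and_or.mp hcorner with hout | hout <;> split_ifs <;>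
    nlinarith [sq_nonneg (θ - 0.315), sq_nonneg (lam - 0.205)]

/-- For all `θ, λ ∈ [0,1]`, the lower bound of Equation (8) is at
least `0.5014`. -/
theorem stmt8 (θ lam : ℝ) (hθ : θ ∈ Set.Icc (0:ℝ) 1) (hlam : lam ∈ Set.Icc (0:ℝ) 1) :
    (0.5014:ℝ) ≤
      (1 - θ) * (1 - lam) * (1 - g (min θ lam) + h (min θ lam))
      + (1 - θ) * (∫ y in (0:ℝ)..lam, g y)
      + (1 - lam) * (∫ y in (0:ℝ)..θ, (g y - h y))
      + ∫ y in (0:ℝ)..(min θ lam), (θ + lam - 2 * y) * g y := by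
  rcases le_total θ lam with hle | hle
  · exact le_lowerBound_of_le hθ.1 hle hlam.2
  · exact le_lowerBound_of_ge hlam.1 hle hθ.2
end

section
/- With g as in the explicit construction and h = (1−g)/10, for λ ∈ [0, 0.9] and any θ ∈ [0,1], the partial derivative with respect to θ of G(θ,λ) := (1−θ)(1−λ) + (1−λ)∫₀^θ (g−h) + ∫₀^λ (λ−y)g(y)dy + (1−θ)∫₀^λ (g−h) + ∫₀^λ (θ−y)g(y)dy, namely (1−λ)(g(θ)−h(θ)−1) + ∫₀^λ h(y)dy, is non-positive. -/
/-! The pieces of `g` agree at the breakpoints `0.13` and `0.4`, so `g` is nondecreasing and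
`h` is nonincreasing. Hence `∫₀^λ h ≤ λ h(0) = 0.051074 λ`, while
`g(θ) - h(θ) - 1 = 1.1 (g(θ) - 1) ≤ 1.1 (0.5548 - 1)`; the resulting linear inequality in `λ`
holds up to `λ ≈ 0.905`. -/

theorem Antitone.intervalIntegral_le_mul {f : ℝ → ℝ} (hf : Antitone f) {a b : ℝ} (hab : a ≤ b) :
    ∫ x in a..b, f x ≤ (b - a) * f a := by
  calc ∫ x in a..b, f x ≤ ∫ _ in a..b, f a :=
        intervalIntegral.integral_mono_on hab hf.intervalIntegrable intervalIntegrable_const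
          fun _ hx => hf hx.1
    _ = (b - a) * f a := by rw [intervalIntegral.integral_const, smul_eq_mul]

theorem g_monotone : Monotone g := by
  intro x y hxy
  unfold g
  split_ifs <;> linarith

theorem g_le (y : ℝ) : g y ≤ 0.5548 := by
  unfold g
  split_ifs <;> linarith

theorem h_antitone : Antitone h :=
  fun _ _ hxy => div_le_div_of_nonneg_right (sub_le_sub_left (g_monotone hxy) 1) (by norm_num)

theorem h_zero : h 0 = 0.051074 := by
  norm_num [h, g]

theorem g_sub_h_sub_one (y : ℝ) : g y - h y - 1 = 1.1 * (g y - 1) := by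
  unfold h
  ring

theorem stmt14_general (θ lam : ℝ) (hlam : lam ∈ Set.Icc (0:ℝ) 0.9) :
    (1 - lam) * (g θ - h θ - 1) + (∫ y in (0:ℝ)..lam, h y) ≤ 0 := by
  obtain ⟨hlam0, hlam1⟩ := hlam
  have hint : ∫ y in (0:ℝ)..lam, h y ≤ 0.051074 * lam := by
    simpa [h_zero, mul_comm] using h_antitone.intervalIntegral_le_mul hlam0
  have hg : 1.1 * (g θ - 1) ≤ 1.1 * (0.5548 - 1) := by linarith [g_le θ]
  rw [g_sub_h_sub_one]
  linarith [mul_le_mul_of_nonneg_left hg (by linarith : (0:ℝ) ≤ 1 - lam)]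

/-- For `λ ∈ [0, 0.9]` and `θ ∈ [0,1]`, the partial derivative
in `θ` of the bound of Equation (6), namely
`(1−λ)(g(θ)−h(θ)−1) + ∫₀^λ h(y) dy`, is non-positive. -/
theorem stmt14 (θ lam : ℝ) (hlam : lam ∈ Set.Icc (0:ℝ) 0.9) (hθ : θ ∈ Set.Icc (0:ℝ) 1) :
    (1 - lam) * (g θ - h θ - 1) + (∫ y in (0:ℝ)..lam, h y) ≤ 0 :=
  stmt14_general θ lam hlam
end

section
/- Let g be the explicit piecewise linear function and h = (1−g)/10. Let λ₀ be defined by g(λ₀) + g(1) = 12/11 (so λ₀ ≈ 0.12835, lying in (0, 0.13)). Then for λ ∈ [0, λ₀] and any θ ∈ [0,1] with θ ≥ λ, (1−λ)((g(λ)−h(λ)) + (g(θ)−h(θ)) − 1) ≤ 0; i.e., g(λ) + g(θ) ≤ 12/11 implies the derivative in θ of the bound in Equation (8) is non-positive on this range. -/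
theorem g_sub_h_add_g_sub_h_sub_one (a b : ℝ) :
    (g a - h a) + (g b - h b) - 1 = 11 / 10 * (g a + g b - 12 / 11) := by
  unfold h
  ring

theorem g_sub_h_add_g_sub_h_sub_one_nonpos {a b : ℝ} (hab : g a + g b ≤ 12 / 11) :
    (g a - h a) + (g b - h b) - 1 ≤ 0 := by
  rw [g_sub_h_add_g_sub_h_sub_one]
  linarith

theorem stmt18_general (lam₀ : ℝ)
    (hdef : g lam₀ + g 1 = 12 / 11)
    (lam θ : ℝ) (hlam : lam ∈ Set.Icc (0:ℝ) lam₀) (hθ : θ ∈ Set.Icc (0:ℝ) 1)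
    (hle : lam ≤ θ) :
    (1 - lam) * ((g lam - h lam) + (g θ - h θ) - 1) ≤ 0 := by
  have hsum : g lam + g θ ≤ 12 / 11 :=
    hdef ▸ add_le_add (g_monotone hlam.2) (g_monotone hθ.2)
  exact mul_nonpos_of_nonneg_of_nonpos (sub_nonneg.2 (hle.trans hθ.2))
    (g_sub_h_add_g_sub_h_sub_one_nonpos hsum)

/-- Let `λ₀ ∈ (0, 0.13)` satisfy `g(λ₀) + g(1) = 12/11`. Then for all
`λ ∈ [0, λ₀]` and `θ ∈ [0,1]` with `θ ≥ λ`,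
`(1−λ)((g(λ)−h(λ)) + (g(θ)−h(θ)) − 1) ≤ 0`. -/
theorem stmt18 (lam₀ : ℝ) (hlam₀ : lam₀ ∈ Set.Ioo (0:ℝ) 0.13)
    (hdef : g lam₀ + g 1 = 12 / 11)
    (lam θ : ℝ) (hlam : lam ∈ Set.Icc (0:ℝ) lam₀) (hθ : θ ∈ Set.Icc (0:ℝ) 1)
    (hle : lam ≤ θ) :
    (1 - lam) * ((g lam - h lam) + (g θ - h θ) - 1) ≤ 0 :=
  stmt18_general lam₀ hdef lam θ hlam hθ hle
end
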